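/- Let M be an IGMM and S a set of subsets of Q that is closed and such that every member of S has nonempty output. Then for every C ∈ S and all states q, q' ∈ C, q ≈ q' (the members of S are variation classes). -/
import Mathlib


/-- An incompletely specified generalized Mealy machine (IGMM) over input
propositions `I`, output propositions `O`, with state set `Q`.
Input valuations are `I → Bool`, output valuations are `O → Bool`.
`delta` is the partial transition function, `lam` the output function. -/
structure IGMM (I O Q : Type*) where
  init : Q
  delta : Q → (I → Bool) → Option Q
  lam : Q → (I → Bool) → Set (O → Bool)
  lam_nonempty : ∀ q i, (lam q i).Nonempty
  lam_top : ∀ q i, delta q i = none → lam q i = Set.univ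

namespace IGMM

/-- `(ι, o) ⊨ M_q` : either an infinite run, or a finite run ending where `delta`
is undefined. -/
def Sat {I O Q : Type*} (M : IGMM I O Q) (q : Q) (ι : ℕ → I → Bool)
    (o : ℕ → O → Bool) : Prop :=
  (∃ qs : ℕ → Q, qs 0 = q ∧
      ∀ j : ℕ, M.delta (qs j) (ι j) = some (qs (j + 1)) ∧ o j ∈ M.lam (qs j) (ι j)) ∨
  (∃ (k : ℕ) (qs : ℕ → Q), qs 0 = q ∧
      (∀ j < k, M.delta (qs j) (ι j) = some (qs (j + 1)) ∧ o j ∈ M.lam (qs j) (ι j)) ∧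
      M.delta (qs k) (ι k) = none)

/-- The behaviour set `Beh_M(q, ι) = {o | (ι, o) ⊨ M_q}`. -/
def Beh {I O Q : Type*} (M : IGMM I O Q) (q : Q) (ι : ℕ → I → Bool) :
    Set (ℕ → O → Bool) :=
  {o | M.Sat q ι o}

end IGMM

/-- `q' ⊑ q` : the state `q'` of `M'` is a specialization of the state `q` of `M`. -/
def IGMM.Specializes {I O Q' Q : Type*} (M' : IGMM I O Q') (q' : Q')
    (M : IGMM I O Q) (q : Q) : Prop :=
  ∀ ι : ℕ → I → Bool, M'.Beh q' ι ⊆ M.Beh q ι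

/-- `q' ≈ q` : the state `q'` of `M'` is a variation of the state `q` of `M`. -/
def IGMM.IsVariation {I O Q' Q : Type*} (M' : IGMM I O Q') (q' : Q')
    (M : IGMM I O Q) (q : Q) : Prop :=
  ∀ ι : ℕ → I → Bool, (M'.Beh q' ι ∩ M.Beh q ι).Nonempty

namespace IGMM

/-- `Succ(C, i)`: successors of the states of `C` under input `i`. -/
def Succ {I O Q : Type*} (M : IGMM I O Q) (C : Set Q) (i : I → Bool) : Set Q :=
  {p | ∃ q ∈ C, M.delta q i = some p}

/-- `Out(C, i) = ⋂_{q ∈ C} λ(q, i)`. -/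
def Out {I O Q : Type*} (M : IGMM I O Q) (C : Set Q) (i : I → Bool) :
    Set (O → Bool) :=
  ⋂ q ∈ C, M.lam q i

/-- `S` covers `M`: every state belongs to some member of `S`. -/
def Covers {I O Q : Type*} (M : IGMM I O Q) (S : Set (Set Q)) : Prop :=
  ∀ q : Q, ∃ C ∈ S, q ∈ C

/-- `S` is closed: the successors of each member under each input are contained
in some member. -/
def SuccClosed {I O Q : Type*} (M : IGMM I O Q) (S : Set (Set Q)) : Prop :=
  ∀ C ∈ S, ∀ i : I → Bool, ∃ C' ∈ S, M.Succ C i ⊆ C'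

/-- `C` has nonempty output: `Out(C, i) ≠ ∅` for every input `i`. -/
def NonemptyOutput {I O Q : Type*} (M : IGMM I O Q) (C : Set Q) : Prop :=
  ∀ i : I → Bool, (M.Out C i).Nonempty

end IGMM


theorem sat_of_chain {I O Q : Type*} (M : IGMM I O Q) (ι : ℕ → I → Bool)
    (Cs : ℕ → Set Q) (hsub : ∀ n, M.Succ (Cs n) (ι n) ⊆ Cs (n + 1))
    (o : ℕ → O → Bool) (ho : ∀ n, o n ∈ M.Out (Cs n) (ι n))
    (q : Q) (hq : q ∈ Cs 0) : M.Sat q ι o := by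
  classical
  let run : ℕ → Q := fun n => Nat.rec q (fun n r => (M.delta r (ι n)).getD r) n
  have hruns : ∀ n, run (n + 1) = (M.delta (run n) (ι n)).getD (run n) := fun n => rfl
  have hmem : ∀ n, (∀ j < n, (M.delta (run j) (ι j)).isSome) → run n ∈ Cs n := by
    intro n
    induction n with
    | zero => intro _; exact hq
    | succ n ih =>
      intro h
      obtain ⟨p, hp⟩ := Option.isSome_iff_exists.mp (h n (by omega))
      have hr : run (n + 1) = p := by rw [hruns, hp]; rfl
      rw [hr]
      exact hsub n ⟨run n, ih (fun j hj => h j (by omega)), hp⟩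
  have hlam : ∀ j, run j ∈ Cs j → o j ∈ M.lam (run j) (ι j) := by
    intro j hj
    have := ho j
    exact Set.mem_iInter₂.mp this _ hj
  by_cases h : ∀ j, (M.delta (run j) (ι j)).isSome
  · left
    refine ⟨run, rfl, fun j => ?_⟩
    obtain ⟨p, hp⟩ := Option.isSome_iff_exists.mp (h j)
    have hmemj := hmem j (fun k _ => h k)
    refine ⟨?_, hlam j hmemj⟩
    rw [hruns j, hp]; rfl
  · push_neg at h
    have h' : ∃ j, M.delta (run j) (ι j) = none := by
      obtain ⟨j, hj⟩ := h
      exact ⟨j, Option.not_isSome_iff_eq_none.mp hj⟩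
    right
    refine ⟨Nat.find h', run, rfl, fun j hj => ?_, Nat.find_spec h'⟩
    have hjs : ∀ l, l < Nat.find h' → (M.delta (run l) (ι l)).isSome := fun l hl =>
      Option.ne_none_iff_isSome.mp (Nat.find_min h' hl)
    obtain ⟨p, hp⟩ := Option.isSome_iff_exists.mp (hjs j hj)
    have hmemj := hmem j (fun l hl => hjs l (by omega))
    refine ⟨?_, hlam j hmemj⟩
    rw [hruns j, hp]; rfl

/-- if `S` is closed and every member of `S` has nonempty output,
then every member of `S` is a variation class: any two of its states are
variations of each other. -/
theorem members_are_variation_classes {I O Q : Type*}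
    [Fintype I] [Fintype O] [Fintype Q]
    (M : IGMM I O Q) (S : Set (Set Q))
    (hclosed : M.SuccClosed S) (hne : ∀ C ∈ S, M.NonemptyOutput C) :
    ∀ C ∈ S, ∀ q ∈ C, ∀ q' ∈ C, IGMM.IsVariation M q M q' := by
  classical
  intro C hC q hq q' hq' ι
  let f : {D : Set Q // D ∈ S} → (I → Bool) → {D : Set Q // D ∈ S} := fun p i =>
    ⟨(hclosed p.1 p.2 i).choose, (hclosed p.1 p.2 i).choose_spec.1⟩
  have hf : ∀ p i, M.Succ p.1 i ⊆ (f p i).1 := fun p i =>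
    (hclosed p.1 p.2 i).choose_spec.2
  let Cs' : ℕ → {D : Set Q // D ∈ S} := fun n => Nat.rec ⟨C, hC⟩ (fun n p => f p (ι n)) n
  let Cs : ℕ → Set Q := fun n => (Cs' n).1
  have hsub : ∀ n, M.Succ (Cs n) (ι n) ⊆ Cs (n + 1) := fun n => hf (Cs' n) (ι n)
  let o : ℕ → O → Bool := fun n => (hne (Cs n) (Cs' n).2 (ι n)).choose
  have ho : ∀ n, o n ∈ M.Out (Cs n) (ι n) := fun n =>
    (hne (Cs n) (Cs' n).2 (ι n)).choose_spec
  exact ⟨o, sat_of_chain M ι Cs hsub o ho q hq, sat_of_chain M ι Cs hsub o ho q' hq'⟩
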